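/- arXiv:1810.04845 — 2 statements merged into one kernel-verified Lean document; each statement's English description precedes it below -/
import Mathlib

section
/- Let T ∈ L(ℓ∞²) be defined on ℝ² with the max norm by T(a,b) = (0,a). Then the norm attainment set of T is M_T = { ±(1,b) : |b| ≤ 1 }, which is of the form D ∪ (−D) for a connected subset D of the unit sphere, but M_T is not connected and has more than two elements. -/
lemma norm_vec2 (a b : ℝ) : ‖(![a, b] : Fin 2 → ℝ)‖ = max |a| |b| := by
  apply le_antisymm
  · apply pi_norm_le_iff_of_nonneg ((abs_nonneg a).trans (le_max_left _ _)) |>.2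
    intro i
    fin_cases i <;> simp [Real.norm_eq_abs, le_max_left, le_max_right]
  · apply max_le
    · simpa [Real.norm_eq_abs] using norm_le_pi_norm (![a, b] : Fin 2 → ℝ) 0
    · simpa [Real.norm_eq_abs] using norm_le_pi_norm (![a, b] : Fin 2 → ℝ) 1

lemma eta_vec2 (x : Fin 2 → ℝ) : x = ![x 0, x 1] := by
  funext i; fin_cases i <;> simp

theorem norm_attainment_example_linfty
    (T : (Fin 2 → ℝ) →L[ℝ] (Fin 2 → ℝ)) (hT : ∀ v : Fin 2 → ℝ, T v = ![0, v 0]) :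
    {x : Fin 2 → ℝ | ‖x‖ = 1 ∧ ‖T x‖ = ‖T‖} =
      {w : Fin 2 → ℝ | ∃ b : ℝ, |b| ≤ 1 ∧ (w = ![1, b] ∨ w = ![-1, -b])} ∧
    (∃ D : Set (Fin 2 → ℝ), IsConnected D ∧ D ⊆ {x : Fin 2 → ℝ | ‖x‖ = 1} ∧
      {x : Fin 2 → ℝ | ‖x‖ = 1 ∧ ‖T x‖ = ‖T‖} = D ∪ (-D)) ∧
    ¬ IsConnected {x : Fin 2 → ℝ | ‖x‖ = 1 ∧ ‖T x‖ = ‖T‖} ∧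
    (∃ u v w : Fin 2 → ℝ,
      u ∈ {x : Fin 2 → ℝ | ‖x‖ = 1 ∧ ‖T x‖ = ‖T‖} ∧
      v ∈ {x : Fin 2 → ℝ | ‖x‖ = 1 ∧ ‖T x‖ = ‖T‖} ∧
      w ∈ {x : Fin 2 → ℝ | ‖x‖ = 1 ∧ ‖T x‖ = ‖T‖} ∧
      u ≠ v ∧ u ≠ w ∧ v ≠ w) := by
  have hTx : ∀ x : Fin 2 → ℝ, ‖T x‖ = |x 0| := by
    intro x
    rw [hT, norm_vec2]
    simp [max_eq_right (abs_nonneg (x 0))]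
  have habs : ∀ x : Fin 2 → ℝ, ∀ i, |x i| ≤ ‖x‖ := by
    intro x i; simpa [Real.norm_eq_abs] using norm_le_pi_norm x i
  have hnorm : ‖T‖ = 1 := by
    apply le_antisymm
    · apply ContinuousLinearMap.opNorm_le_bound T zero_le_one
      intro x
      rw [hTx, one_mul]
      exact habs x 0
    · have h1 : ‖T ![1, 0]‖ = 1 := by rw [hTx]; norm_num
      have h2 : ‖(![1, 0] : Fin 2 → ℝ)‖ = 1 := by rw [norm_vec2]; norm_num
      have := T.le_opNorm ![1, 0]
      rw [h1, h2, mul_one] at this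
      exact this
  have hset : {x : Fin 2 → ℝ | ‖x‖ = 1 ∧ ‖T x‖ = ‖T‖} =
      {w : Fin 2 → ℝ | ∃ b : ℝ, |b| ≤ 1 ∧ (w = ![1, b] ∨ w = ![-1, -b])} := by
    ext x
    simp only [Set.mem_setOf_eq, hnorm, hTx]
    constructor
    · rintro ⟨hx, hx0⟩
      rcases abs_eq (by norm_num : (0:ℝ) ≤ 1) |>.1 hx0 with h | h
      · exact ⟨x 1, hx ▸ habs x 1, Or.inl (by funext i; fin_cases i <;> simp [h])⟩
      · exact ⟨-(x 1), by simpa using hx ▸ habs x 1,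
          Or.inr (by funext i; fin_cases i <;> simp [h])⟩
    · rintro ⟨b, hb, rfl | rfl⟩
      · refine ⟨?_, by norm_num⟩
        rw [norm_vec2]; simp [max_eq_left (by simpa using hb)]
      · refine ⟨?_, by norm_num⟩
        rw [norm_vec2]; simp [max_eq_left (by simpa using hb)]
  refine ⟨hset, ?_, ?_, ?_⟩
  · refine ⟨(fun b => ![1, b]) '' Set.Icc (-1 : ℝ) 1, ?_, ?_, ?_⟩
    · apply (isConnected_Icc (by norm_num : (-1:ℝ) ≤ 1)).image
      apply Continuous.continuousOn
      apply continuous_pi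
      intro i
      fin_cases i <;> simp <;> [exact continuous_const; exact continuous_id]
    · rintro x ⟨b, hb, rfl⟩
      rw [Set.mem_setOf_eq, norm_vec2]
      rw [Set.mem_Icc] at hb
      simp [max_eq_left (by rw [abs_le]; exact hb : |b| ≤ 1)]
    · rw [hset]
      ext x
      simp only [Set.mem_setOf_eq, Set.mem_union, Set.mem_neg, Set.mem_image, Set.mem_Icc]
      constructor
      · rintro ⟨b, hb, rfl | rfl⟩
        · exact Or.inl ⟨b, abs_le.1 hb, rfl⟩
        · refine Or.inr ⟨b, abs_le.1 hb, ?_⟩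
          funext i; fin_cases i <;> simp
      · rintro (⟨b, hb, rfl⟩ | ⟨b, hb, h⟩)
        · exact ⟨b, abs_le.2 hb, Or.inl rfl⟩
        · refine ⟨b, abs_le.2 hb, Or.inr ?_⟩
          have hx : x = -![1, b] := by rw [h, neg_neg]
          rw [hx]; funext i; fin_cases i <;> simp
  · intro h
    have hp := h.isPreconnected
    have h1 : (![1, 0] : Fin 2 → ℝ) ∈ {x : Fin 2 → ℝ | ‖x‖ = 1 ∧ ‖T x‖ = ‖T‖} := by
      rw [hset]; exact ⟨0, by norm_num, Or.inl rfl⟩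
    have h2 : (![-1, 0] : Fin 2 → ℝ) ∈ {x : Fin 2 → ℝ | ‖x‖ = 1 ∧ ‖T x‖ = ‖T‖} := by
      rw [hset]; refine ⟨0, by norm_num, Or.inr (by norm_num)⟩
    have := hp {x | 0 < x 0} {x | x 0 < 0}
      (isOpen_lt continuous_const (continuous_apply 0))
      (isOpen_lt (continuous_apply 0) continuous_const)
      (by
        intro x hx
        rw [hset] at hx
        obtain ⟨b, hb, rfl | rfl⟩ := hx
        · left; norm_num
        · right; norm_num)
      ⟨![1, 0], h1, by norm_num⟩
      ⟨![-1, 0], h2, by norm_num⟩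
    obtain ⟨x, _, hx1, hx2⟩ := this
    simp only [Set.mem_setOf_eq] at hx1 hx2
    linarith
  · refine ⟨![1, 0], ![1, 1], ![-1, 0], ?_, ?_, ?_, ?_, ?_, ?_⟩
    · rw [hset]; exact ⟨0, by norm_num, Or.inl rfl⟩
    · rw [hset]; exact ⟨1, by norm_num, Or.inl rfl⟩
    · rw [hset]; exact ⟨0, by norm_num, Or.inr (by norm_num)⟩
    · intro h; have := congr_fun h 1; norm_num at this
    · intro h; have := congr_fun h 0; norm_num at this
    · intro h; have := congr_fun h 0; norm_num at this
end

section
/- Let X be a normed space, Y a real Banach space, T, A bounded linear operators from X to Y with T ⊥_B A, and ε > 0 fixed. If there exists a norming sequence {xₙ} for T (unit vectors with ‖Txₙ‖ → ‖T‖) such that ‖Axₙ‖ → 0, then ‖T‖ = sup{ [Tx, y] : ‖x‖ = 1, ‖y‖ = 1, [·,·] a compatible semi-inner-product on Y, |[Ax, y]| < ε }. -/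
/-- A semi-inner-product on a real normed space, compatible with the norm. -/
def IsSIP {Y : Type*} [NormedAddCommGroup Y] [NormedSpace ℝ Y] (s : Y → Y → ℝ) : Prop :=
  (∀ (a b : ℝ) (u v w : Y), s (a • u + b • v) w = a * s u w + b * s v w) ∧
  (∀ u : Y, u ≠ 0 → 0 < s u u) ∧
  (∀ u v : Y, (s u v) ^ 2 ≤ s u u * s v v) ∧
  (∀ (a : ℝ) (u v : Y), s u (a • v) = a * s u v) ∧
  (∀ u : Y, s u u = ‖u‖ ^ 2)

noncomputable section SIPConstruction

variable {Y : Type*} [NormedAddCommGroup Y] [NormedSpace ℝ Y]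

/-- Setoid identifying points on the same line through the origin. -/
def lineSetoid (Y : Type*) [AddCommGroup Y] [Module ℝ Y] : Setoid Y where
  r v w := ∃ c : ℝ, c ≠ 0 ∧ w = c • v
  iseqv := ⟨fun v => ⟨1, one_ne_zero, (one_smul ℝ v).symm⟩,
    fun {v w} h => by
      obtain ⟨c, hc, h⟩ := h
      exact ⟨c⁻¹, inv_ne_zero hc, by rw [h, smul_smul, inv_mul_cancel₀ hc, one_smul]⟩,
    fun {u v w} h h' => by
      obtain ⟨c, hc, h⟩ := h
      obtain ⟨d, hd, h'⟩ := h'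
      exact ⟨d * c, mul_ne_zero hd hc, by rw [h', h, smul_smul]⟩⟩

/-- A chosen representative on each line. -/
def lineRep (v : Y) : Y := (Quotient.mk (lineSetoid Y) v).out

lemma lineRep_rel (v : Y) : ∃ c : ℝ, c ≠ 0 ∧ v = c • lineRep v := by
  have h : Quotient.mk (lineSetoid Y) (lineRep v) = Quotient.mk (lineSetoid Y) v :=
    Quotient.out_eq _
  have h2 : (lineSetoid Y).r (lineRep v) v := Quotient.exact h
  exact h2

lemma lineRep_smul {a : ℝ} (ha : a ≠ 0) (v : Y) : lineRep (a • v) = lineRep v := by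
  have hrel : (lineSetoid Y).r v (a • v) := ⟨a, ha, rfl⟩
  have h : Quotient.mk (lineSetoid Y) v = Quotient.mk (lineSetoid Y) (a • v) :=
    Quotient.sound hrel
  unfold lineRep
  rw [h]

lemma lineRep_ne_zero {v : Y} (hv : v ≠ 0) : lineRep v ≠ 0 := by
  obtain ⟨c, hc, h⟩ := lineRep_rel v
  intro h0
  rw [h0, smul_zero] at h
  exact hv h

/-- The coefficient of `v` with respect to its line representative. -/
def lineCoef (v : Y) : ℝ := (lineRep_rel v).choose

lemma lineCoef_spec (v : Y) : lineCoef v ≠ 0 ∧ v = lineCoef v • lineRep v :=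
  (lineRep_rel v).choose_spec

lemma lineCoef_unique {v : Y} (hv : v ≠ 0) {c : ℝ} (h : v = c • lineRep v) :
    c = lineCoef v := by
  have h2 := (lineCoef_spec v).2
  have hr := lineRep_ne_zero hv
  have : (c - lineCoef v) • lineRep v = 0 := by
    rw [sub_smul, ← h, ← h2, sub_self]
  rcases smul_eq_zero.mp this with h' | h'
  · linarith [sub_eq_zero.mp (by exact_mod_cast h')]
  · exact absurd h' hr

lemma lineCoef_smul {a : ℝ} (ha : a ≠ 0) {v : Y} (hv : v ≠ 0) :
    lineCoef (a • v) = a * lineCoef v := by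
  have hav : a • v ≠ 0 := smul_ne_zero ha hv
  have h2 := (lineCoef_spec v).2
  have : a • v = (a * lineCoef v) • lineRep (a • v) := by
    rw [lineRep_smul ha, mul_smul, ← h2]
  exact (lineCoef_unique hav this).symm

open Classical in
/-- A chosen norming functional for each vector (0 when the vector is 0). -/
def dualFn (w : Y) : Y →L[ℝ] ℝ :=
  if h : w = 0 then 0 else (exists_dual_vector ℝ w (norm_ne_zero_iff.mpr h)).choose

lemma dualFn_norm {w : Y} (hw : w ≠ 0) : ‖dualFn w‖ = 1 := by
  rw [dualFn, dif_neg hw]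
  exact (exists_dual_vector ℝ w (norm_ne_zero_iff.mpr hw)).choose_spec.1

lemma dualFn_apply_self {w : Y} (hw : w ≠ 0) : dualFn w w = ‖w‖ := by
  rw [dualFn, dif_neg hw]
  exact (exists_dual_vector ℝ w (norm_ne_zero_iff.mpr hw)).choose_spec.2

lemma lineRep_zero : lineRep (0 : Y) = 0 := by
  by_contra h
  obtain ⟨c, hc, hrel⟩ : ∃ c : ℝ, c ≠ 0 ∧ (0 : Y) = c • lineRep (0 : Y) := lineRep_rel 0
  exact h (by simpa [hc] using hrel.symm)

/-- The constructed semi-inner-product. -/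
def sip (u v : Y) : ℝ := lineCoef v * ‖lineRep v‖ * dualFn (lineRep v) u

lemma sip_zero_right (u : Y) : sip u (0 : Y) = 0 := by
  simp [sip, lineRep_zero]

lemma norm_eq_coef (v : Y) (hv : v ≠ 0) : ‖v‖ = |lineCoef v| * ‖lineRep v‖ := by
  conv_lhs => rw [(lineCoef_spec v).2]
  rw [norm_smul, Real.norm_eq_abs]

lemma sip_self (v : Y) : sip v v = ‖v‖ ^ 2 := by
  by_cases hv : v = 0
  · simp [hv, sip_zero_right]
  · have hr := lineRep_ne_zero hv
    have : dualFn (lineRep v) v = lineCoef v * ‖lineRep v‖ := by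
      nth_rewrite 2 [(lineCoef_spec v).2]
      rw [map_smul, smul_eq_mul, dualFn_apply_self hr]
    rw [sip, this, norm_eq_coef v hv]
    rcases abs_cases (lineCoef v) with ⟨h1, _⟩ | ⟨h1, _⟩ <;> rw [h1] <;> ring

lemma exists_isSIP (Y : Type*) [NormedAddCommGroup Y] [NormedSpace ℝ Y] :
    ∃ s : Y → Y → ℝ, IsSIP s := by
  refine ⟨sip, ?_, ?_, ?_, ?_, sip_self⟩
  · intro a b u v w
    simp only [sip, map_add, map_smul, smul_eq_mul]
    ring
  · intro u hu
    rw [sip_self]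
    have : 0 < ‖u‖ := norm_pos_iff.mpr hu
    positivity
  · intro u v
    by_cases hv : v = 0
    · simp [hv, sip_zero_right, sip_self]
    · have hr := lineRep_ne_zero hv
      have hb : |dualFn (lineRep v) u| ≤ ‖u‖ := by
        calc |dualFn (lineRep v) u| ≤ ‖dualFn (lineRep v)‖ * ‖u‖ :=
              (dualFn (lineRep v)).le_opNorm u
        _ = ‖u‖ := by rw [dualFn_norm hr, one_mul]
      rw [sip_self, sip_self, sip]
      have h1 : (lineCoef v * ‖lineRep v‖) ^ 2 = ‖v‖ ^ 2 := by
        rw [norm_eq_coef v hv]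
        rcases abs_cases (lineCoef v) with ⟨h1, _⟩ | ⟨h1, _⟩ <;> rw [h1] <;> ring
      have h2 : (dualFn (lineRep v) u) ^ 2 ≤ ‖u‖ ^ 2 := by
        nlinarith [abs_nonneg (dualFn (lineRep v) u), sq_abs (dualFn (lineRep v) u)]
      calc (lineCoef v * ‖lineRep v‖ * dualFn (lineRep v) u) ^ 2
          = (lineCoef v * ‖lineRep v‖) ^ 2 * (dualFn (lineRep v) u) ^ 2 := by ring
        _ ≤ ‖v‖ ^ 2 * ‖u‖ ^ 2 := by
            rw [h1]; exact mul_le_mul_of_nonneg_left h2 (by positivity)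
        _ = ‖u‖ ^ 2 * ‖v‖ ^ 2 := by ring
  · intro a u v
    by_cases ha : a = 0
    · simp [ha, sip_zero_right]
    by_cases hv : v = 0
    · simp [hv, sip_zero_right]
    · rw [sip, sip, lineRep_smul ha, lineCoef_smul ha hv]
      ring

/-- Cauchy–Schwarz consequence of the SIP axioms. -/
lemma IsSIP.abs_le {s : Y → Y → ℝ} (hs : IsSIP s) (u v : Y) :
    |s u v| ≤ ‖u‖ * ‖v‖ := by
  obtain ⟨_, _, hcs, _, hself⟩ := hs
  have := hcs u v
  rw [hself u, hself v] at this
  nlinarith [abs_nonneg (s u v), sq_abs (s u v), norm_nonneg u, norm_nonneg v,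
    mul_nonneg (norm_nonneg u) (norm_nonneg v)]

lemma IsSIP.zero_left {s : Y → Y → ℝ} (hs : IsSIP s) (v : Y) : s 0 v = 0 := by
  have h := hs.1 0 0 0 0 v
  simpa using h

end SIPConstruction

theorem norm_eq_sup_sip_small
    {X Y : Type*} [NormedAddCommGroup X] [NormedSpace ℝ X]
    [NormedAddCommGroup Y] [NormedSpace ℝ Y] [CompleteSpace Y]
    (T A : X →L[ℝ] Y)
    (horth : ∀ l : ℝ, ‖T + l • A‖ ≥ ‖T‖)
    (ε : ℝ) (hε : 0 < ε)
    (hseq : ∃ x : ℕ → X, (∀ n, ‖x n‖ = 1) ∧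
      Filter.Tendsto (fun n => ‖T (x n)‖) Filter.atTop (nhds ‖T‖) ∧
      Filter.Tendsto (fun n => ‖A (x n)‖) Filter.atTop (nhds 0)) :
    ‖T‖ = sSup {r : ℝ | ∃ (x : X) (y : Y) (s : Y → Y → ℝ),
      ‖x‖ = 1 ∧ ‖y‖ = 1 ∧ IsSIP s ∧ |s (A x) y| < ε ∧ r = s (T x) y} := by
  set S := {r : ℝ | ∃ (x : X) (y : Y) (s : Y → Y → ℝ),
      ‖x‖ = 1 ∧ ‖y‖ = 1 ∧ IsSIP s ∧ |s (A x) y| < ε ∧ r = s (T x) y} with hS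
  obtain ⟨x, hx1, hxT, hxA⟩ := hseq
  -- each element of S is ≤ ‖T‖
  have hub : ∀ r ∈ S, r ≤ ‖T‖ := by
    rintro r ⟨u, y, s, hu1, hy1, hs, _, rfl⟩
    calc s (T u) y ≤ |s (T u) y| := le_abs_self _
      _ ≤ ‖T u‖ * ‖y‖ := hs.abs_le _ _
      _ = ‖T u‖ := by rw [hy1, mul_one]
      _ ≤ ‖T‖ * ‖u‖ := T.le_opNorm u
      _ = ‖T‖ := by rw [hu1, mul_one]
  have hbdd : BddAbove S := ⟨‖T‖, hub⟩
  by_cases hT : ‖T‖ = 0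
  · -- then T = 0 and every element of S is 0
    have hT0 : T = 0 := by rwa [norm_eq_zero] at hT
    have hSsub : S ⊆ {0} := by
      rintro r ⟨u, y, s, hu1, hy1, hs, _, rfl⟩
      simp [hT0, hs.zero_left]
    rcases Set.eq_empty_or_nonempty S with he | hne
    · rw [hT, he, Real.sSup_empty]
    · have : S = {0} := Set.eq_singleton_iff_nonempty_unique_mem.mpr ⟨hne, hSsub⟩
      rw [hT, this, csSup_singleton]
  · have hTpos : 0 < ‖T‖ := lt_of_le_of_ne (norm_nonneg T) (Ne.symm hT)
    obtain ⟨s, hs⟩ := exists_isSIP Y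
    -- eventually ‖T (x n)‖ ∈ S
    have hev : ∀ᶠ n in Filter.atTop, ‖T (x n)‖ ∈ S := by
      have h1 : ∀ᶠ n in Filter.atTop, ‖T‖ / 2 < ‖T (x n)‖ :=
        hxT.eventually (eventually_gt_nhds (by linarith))
      have h2 : ∀ᶠ n in Filter.atTop, ‖A (x n)‖ < ε :=
        hxA.eventually (eventually_lt_nhds hε)
      filter_upwards [h1, h2] with n hn1 hn2
      have hTx : T (x n) ≠ 0 := by
        intro h; rw [h, norm_zero] at hn1; linarith
      have hTxpos : 0 < ‖T (x n)‖ := norm_pos_iff.mpr hTx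
      refine ⟨x n, ‖T (x n)‖⁻¹ • T (x n), s, hx1 n, ?_, hs, ?_, ?_⟩
      · rw [norm_smul, norm_inv, norm_norm, inv_mul_cancel₀ hTxpos.ne']
      · have := hs.abs_le (A (x n)) (‖T (x n)‖⁻¹ • T (x n))
        have hy : ‖(‖T (x n)‖⁻¹ • T (x n))‖ = 1 := by
          rw [norm_smul, norm_inv, norm_norm, inv_mul_cancel₀ hTxpos.ne']
        rw [hy, mul_one] at this
        linarith
      · obtain ⟨_, _, _, hhom, hself⟩ := hs
        rw [hhom, hself]
        field_simp
    have hle : ∀ᶠ n in Filter.atTop, ‖T (x n)‖ ≤ sSup S := by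
      filter_upwards [hev] with n hn
      exact le_csSup hbdd hn
    have h1 : ‖T‖ ≤ sSup S := le_of_tendsto hxT hle
    have h2 : sSup S ≤ ‖T‖ := Real.sSup_le hub (norm_nonneg T)
    linarith
end
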